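/- Let f̂(x) = Σ_{k=0}^∞ ĉ_k x^{2k} be absolutely convergent for all real x, let β ≠ 0 and x ≥ 0. Then ∫_0^x φ(βt) f̂(t) dt = (1/2) Σ_{k=0}^∞ ((2k-1)!! ĉ_k / |β|^{2k+1}) · P(k + 1/2, β²x²/2). -/

import Mathlib

open Real MeasureTheory

/-- Standard normal density. -/
noncomputable def stdPdf (t : ℝ) : ℝ := Real.exp (-t ^ 2 / 2) / Real.sqrt (2 * Real.pi)

/-- Lower regularized incomplete gamma function P(a,x) = γ(a,x)/Γ(a). -/
noncomputable def regGammaP (a x : ℝ) : ℝ :=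
  (∫ t in (0:ℝ)..x, t ^ (a - 1) * Real.exp (-t)) / Real.Gamma a

/-- (2k-1)!! = (2k)!/(2^k k!), with (-1)!! = 1. -/
noncomputable def oddDF' (k : ℕ) : ℝ := (2 * k).factorial / (2 ^ k * k.factorial)

/-!
The substitution `s = β²t²/2` turns `∫₀ˣ φ(βt) t^{2k} dt` into a multiple of the lower incomplete
gamma integral `γ(k + 1/2, β²x²/2)`, and `Γ(k + 1/2) = (2k - 1)!! √π / 2^k` turns that multiple
into the stated coefficient. The series may be integrated termwise since on `[0, x]` its terms are
dominated by `|c_k x^{2k}|`.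
-/

open Set intervalIntegral
open scoped Nat Interval

lemma oddDF'_eq_doubleFactorial (k : ℕ) : oddDF' k = ((2 * k - 1)‼ : ℕ) := by
  rcases k with _ | k
  · simp [oddDF']
  have h := Nat.factorial_eq_mul_doubleFactorial (2 * k + 1)
  rw [show 2 * k + 1 + 1 = 2 * (k + 1) by ring, Nat.doubleFactorial_two_mul] at h
  rw [oddDF', h, show 2 * (k + 1) - 1 = 2 * k + 1 by omega]
  push_cast
  field_simp

lemma Gamma_nat_add_half_eq_oddDF' (k : ℕ) : Gamma (k + 1 / 2) = oddDF' k * √π / 2 ^ k := by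
  rw [Real.Gamma_nat_add_half, oddDF'_eq_doubleFactorial]

lemma hasSum_integral_mul_even_series {g : ℝ → ℝ} {c : ℕ → ℝ} {x : ℝ} (hx : 0 ≤ x)
    (hg : IntervalIntegrable g volume 0 x) (hc : Summable fun k => |c k * x ^ (2 * k)|) :
    HasSum (fun k => ∫ t in (0:ℝ)..x, g t * (c k * t ^ (2 * k)))
      (∫ t in (0:ℝ)..x, g t * ∑' k, c k * t ^ (2 * k)) := by
  have hle {t : ℝ} (ht : t ∈ Ι 0 x) (k : ℕ) :
      |c k * t ^ (2 * k)| ≤ |c k * x ^ (2 * k)| := by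
    rw [uIoc_of_le hx] at ht
    rw [abs_mul, abs_mul, abs_of_nonneg (pow_nonneg ht.1.le _), abs_of_nonneg (pow_nonneg hx _)]
    gcongr
    exacts [ht.1.le, ht.2]
  have hsum {t : ℝ} (ht : t ∈ Ι 0 x) : Summable fun k => c k * t ^ (2 * k) :=
    (hc.of_nonneg_of_le (fun _ => abs_nonneg _) (hle ht)).of_abs
  refine hasSum_integral_of_dominated_convergence (fun k t => |g t| * |c k * x ^ (2 * k)|)
    (fun _ => hg.def'.aestronglyMeasurable.mul (by fun_prop : Continuous _).aestronglyMeasurable)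
    (fun k => ae_of_all _ fun t ht => ?_) (ae_of_all _ fun _ _ => hc.mul_left _) ?_
    (ae_of_all _ fun t ht => (hsum ht).hasSum.mul_left (g t))
  · rw [norm_mul, Real.norm_eq_abs, Real.norm_eq_abs]
    exact mul_le_mul_of_nonneg_left (hle ht k) (abs_nonneg _)
  · simp_rw [tsum_mul_left]
    exact hg.abs.mul_const _

lemma rpow_mul_exp_neg_comp_half_sq_mul_eq_stdPdf {β t : ℝ} (hβ : β ≠ 0) (ht : 0 < t)
    (k : ℕ) :
    (β ^ 2 * t ^ 2 / 2) ^ ((k : ℝ) + 1 / 2 - 1) * exp (-(β ^ 2 * t ^ 2 / 2)) * (β ^ 2 * t) =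
      2 * √π / 2 ^ k * |β| ^ (2 * k + 1) * (stdPdf (β * t) * t ^ (2 * k)) := by
  set s := β ^ 2 * t ^ 2 / 2 with hs
  have hsqrt : √s = |β| * t / √2 := by
    rw [hs, Real.sqrt_div' _ zero_le_two, Real.sqrt_mul' _ (sq_nonneg t), Real.sqrt_sq_eq_abs,
      Real.sqrt_sq ht.le]
  have hrpow : s ^ ((k : ℝ) + 1 / 2 - 1) = s ^ k / √s := by
    rw [show (k : ℝ) + 1 / 2 - 1 = k - 1 / 2 by ring, Real.rpow_sub (by positivity),
      Real.rpow_natCast, Real.sqrt_eq_rpow]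
  have hpdf : stdPdf (β * t) = exp (-s) / (√2 * √π) := by
    rw [stdPdf, Real.sqrt_mul zero_le_two, hs]; ring_nf
  have hpow : |β| ^ (2 * k + 1) * t ^ (2 * k) = 2 ^ k * s ^ k * |β| := by
    rw [hs, pow_succ, pow_mul, pow_mul, sq_abs, div_pow, mul_pow]
    field_simp
  calc _ = 2 * √π / 2 ^ k * (2 ^ k * s ^ k * |β|) * (exp (-s) / (√2 * √π)) := by
        rw [hrpow, hsqrt, ← sq_abs β]
        field_simp
        rw [Real.sq_sqrt zero_le_two]
    _ = _ := by rw [← hpow, hpdf]; ring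

lemma integral_stdPdf_mul_pow {β x : ℝ} (hβ : β ≠ 0) (hx : 0 ≤ x) (k : ℕ) :
    ∫ t in (0:ℝ)..x, stdPdf (β * t) * t ^ (2 * k) =
      (1 / 2) * (oddDF' k / |β| ^ (2 * k + 1)) * regGammaP (k + 1 / 2) (β ^ 2 * x ^ 2 / 2) := by
  have hderiv (t : ℝ) : HasDerivAt (fun t => β ^ 2 * t ^ 2 / 2) (β ^ 2 * t) t :=
    (((hasDerivAt_pow 2 t).const_mul (β ^ 2)).div_const 2).congr_deriv (by push_cast; ring)
  have hsubst : 2 * √π / 2 ^ k * |β| ^ (2 * k + 1) * ∫ t in (0:ℝ)..x, stdPdf (β * t) * t ^ (2 * k)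
      = ∫ s in (0:ℝ)..(β ^ 2 * x ^ 2 / 2), s ^ ((k : ℝ) + 1 / 2 - 1) * exp (-s) := by
    calc _ = ∫ t in (0:ℝ)..x, ((fun s => s ^ ((k : ℝ) + 1 / 2 - 1) * exp (-s)) ∘
          fun t => β ^ 2 * t ^ 2 / 2) t * (β ^ 2 * t) := by
          rw [← intervalIntegral.integral_const_mul]
          refine integral_congr_ae (ae_of_all _ fun t ht => ?_)
          rw [uIoc_of_le hx] at ht
          exact (rpow_mul_exp_neg_comp_half_sq_mul_eq_stdPdf hβ ht.1 k).symm
      _ = _ := by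
          rw [integral_comp_mul_deriv_of_deriv_nonneg (by fun_prop) (fun t _ => hderiv t)
            (fun t ht => mul_nonneg (sq_nonneg β) (by rw [min_eq_left hx] at ht; exact ht.1.le))]
          norm_num
  rw [regGammaP, ← hsubst, Gamma_nat_add_half_eq_oddDF']
  have : √π ≠ 0 := by positivity
  have : oddDF' k ≠ 0 := by unfold oddDF'; positivity
  field_simp

theorem integral_pdf_mul_even_series (c : ℕ → ℝ) (β x : ℝ) (hβ : β ≠ 0) (hx : 0 ≤ x)
    (habs : ∀ y : ℝ, Summable fun k : ℕ => |c k * y ^ (2 * k)|) :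
    ∫ t in (0:ℝ)..x, stdPdf (β * t) * ∑' k : ℕ, c k * t ^ (2 * k) =
      (1 / 2) * ∑' k : ℕ,
        (oddDF' k * c k / |β| ^ (2 * k + 1)) *
          regGammaP (k + 1 / 2) (β ^ 2 * x ^ 2 / 2) := by
  have hpdf : Continuous fun t => stdPdf (β * t) := by unfold stdPdf; fun_prop
  rw [← (hasSum_integral_mul_even_series hx (hpdf.intervalIntegrable 0 x) (habs x)).tsum_eq,
    ← tsum_mul_left]
  refine tsum_congr fun k => ?_
  simp_rw [mul_left_comm _ (c k), intervalIntegral.integral_const_mul,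
    integral_stdPdf_mul_pow hβ hx]
  ring
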